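/- Rough paths from families of shuffle characters: let d ≥ 1 and for every t ∈ ℝ let χ^t be a character of the shuffle algebra over the alphabet {1,…,d}. For n ≥ 1, a word (i_1,…,i_n) ∈ {1,…,d}^n and s, t ∈ ℝ, define Γ^n_{ts}(i_1,…,i_n) := Σ_{k=0}^{n} (−1)^{n−k} χ^t(i_1,…,i_k) · χ^s(i_n, i_{n−1},…,i_{k+1}). Then: (Chen) for all s, u, t ∈ ℝ and n ≥ 2, Γ^n_{ts}(i_1,…,i_n) = Γ^n_{tu}(i_1,…,i_n) + Γ^n_{us}(i_1,…,i_n) + Σ_{k=1}^{n−1} Γ^k_{tu}(i_1,…,i_k) · Γ^{n−k}_{us}(i_{k+1},…,i_n); and (shuffle) for all s, t ∈ ℝ and all nonempty words u = (i_1,…,i_{n_1}), v = (j_1,…,j_{n_2}), Γ^{n_1}_{ts}(u) · Γ^{n_2}_{ts}(v) = Σ_S Γ^{n_1+n_2}_{ts}(k^S), the sum over all subsets S ⊆ {1,…,n_1+n_2} with |S| = n_1, k^S placing the letters of u in order at the positions of S and those of v at the remaining positions. -/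

import Mathlib

/-!
View `χ^t` as a character of the shuffle Hopf algebra, whose coproduct is deconcatenation and
whose antipode is `S w = (-1)^|w| · reverse w`. Then `Γ_{ts} = χ^t ⋆ (χ^s ∘ S)` for the
convolution `⋆` dual to deconcatenation. Chen's relation is
`Γ_{tu} ⋆ Γ_{us} = χ^t ⋆ ((χ^u ∘ S) ⋆ χ^u) ⋆ (χ^s ∘ S) = χ^t ⋆ (χ^s ∘ S)`, because
`(χ^u ∘ S) ⋆ χ^u` is the counit. The shuffle relation holds because characters are closed under
`⋆` and under composition with `S`. A shuffle is encoded by the Boolean mask that marks which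
letters come from the first word.
-/

/-- The word of length `n₁ + n₂` obtained by placing the letters of `u` in order at the
positions of `S` and the letters of `v` in order at the remaining positions. -/
noncomputable def shuffleWord {d n₁ n₂ : ℕ} (u : Fin n₁ → Fin d) (v : Fin n₂ → Fin d)
    (S : Finset (Fin (n₁ + n₂))) (hS : S.card = n₁) (m : Fin (n₁ + n₂)) : Fin d :=
  if hm : m ∈ S then u ((S.orderIsoOfFin hS).symm ⟨m, hm⟩)
  else v ((Sᶜ.orderIsoOfFin (by rw [Finset.card_compl, hS, Fintype.card_fin]; omega)).symm
      ⟨m, Finset.mem_compl.mpr hm⟩)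

namespace ShuffleAlgebra

open Finset

section Interleave

variable {α : Type*}

/-- The shuffle of `u` and `v` that places the letters of `u` where the mask `m` is `true`. -/
def interleave : List Bool → List α → List α → List α
  | [], _, _ => []
  | true :: m, a :: u, v => a :: interleave m u v
  | false :: m, u, b :: v => b :: interleave m u v
  | _, _, _ => []

@[simp] lemma interleave_nil (u v : List α) : interleave [] u v = [] := by
  cases u <;> cases v <;> rfl

@[simp] lemma interleave_true_cons (m : List Bool) (a : α) (u v : List α) :
    interleave (true :: m) (a :: u) v = a :: interleave m u v := by
  cases v <;> rfl

@[simp] lemma interleave_false_cons (m : List Bool) (u : List α) (b : α) (v : List α) :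
    interleave (false :: m) u (b :: v) = b :: interleave m u v := by
  cases u <;> rfl

variable {m : List Bool} {u v : List α}

lemma interleave_append (hu : m.count true = u.length) (hv : m.count false = v.length)
    (m' : List Bool) (u' v' : List α) :
    interleave (m ++ m') (u ++ u') (v ++ v') = interleave m u v ++ interleave m' u' v' := by
  induction m generalizing u v with
  | nil =>
    rw [List.length_eq_zero_iff.mp hu.symm, List.length_eq_zero_iff.mp hv.symm]
    simp
  | cons b m ih =>
    cases b
    · rcases v with _ | ⟨b, v⟩
      · simp at hv
      · simp_all
    · rcases u with _ | ⟨a, u⟩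
      · simp at hu
      · simp_all

lemma length_interleave (hu : m.count true = u.length) (hv : m.count false = v.length) :
    (interleave m u v).length = m.length := by
  induction m generalizing u v with
  | nil => simp
  | cons b m ih =>
    cases b
    · rcases v with _ | ⟨b, v⟩
      · simp at hv
      · simp_all
    · rcases u with _ | ⟨a, u⟩
      · simp at hu
      · simp_all

lemma reverse_interleave (hu : m.count true = u.length) (hv : m.count false = v.length) :
    (interleave m u v).reverse = interleave m.reverse u.reverse v.reverse := by
  induction m generalizing u v with
  | nil => simp
  | cons b m ih =>
    cases b
    · rcases v with _ | ⟨b, v⟩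
      · simp at hv
      · simp only [List.count_cons, List.length_cons] at hu hv
        have hu' : m.reverse.count true = u.reverse.length := by simpa using hu
        have hv' : m.reverse.count false = v.reverse.length := by simpa using hv
        simpa [ih (by simpa using hu) (by simpa using hv)] using
          (interleave_append hu' hv' [false] [] [b]).symm
    · rcases u with _ | ⟨a, u⟩
      · simp at hu
      · simp only [List.count_cons, List.length_cons] at hu hv
        have hu' : m.reverse.count true = u.reverse.length := by simpa using hu
        have hv' : m.reverse.count false = v.reverse.length := by simpa using hv
        simpa [ih (by simpa using hu) (by simpa using hv)] using
          (interleave_append hu' hv' [true] [a] []).symm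

lemma getElem?_interleave (hu : m.count true = u.length) (hv : m.count false = v.length)
    (i : ℕ) :
    (interleave m u v)[i]? = m[i]?.bind fun b =>
      if b then u[(m.take i).count true]? else v[(m.take i).count false]? := by
  induction m generalizing u v i with
  | nil => simp
  | cons b m ih =>
    cases b
    · rcases v with _ | ⟨b, v⟩
      · simp at hv
      · cases i <;> simp_all
    · rcases u with _ | ⟨a, u⟩
      · simp at hu
      · cases i <;> simp_all

lemma interleave_eq_take_append_drop (hu : m.count true = u.length)
    (hv : m.count false = v.length) (k : ℕ) :
    interleave m u v =
      interleave (m.take k) (u.take ((m.take k).count true)) (v.take ((m.take k).count false)) ++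
        interleave (m.drop k) (u.drop ((m.take k).count true))
          (v.drop ((m.take k).count false)) := by
  have hi := (List.take_sublist k m).count_le true
  have hj := (List.take_sublist k m).count_le false
  conv_lhs => rw [← List.take_append_drop k m, ← List.take_append_drop ((m.take k).count true) u,
    ← List.take_append_drop ((m.take k).count false) v]
  exact interleave_append (by simp; omega) (by simp; omega) _ _ _

lemma length_interleave_take (hu : m.count true = u.length) (hv : m.count false = v.length)
    {k : ℕ} (hk : k ≤ m.length) :
    (interleave (m.take k) (u.take ((m.take k).count true))
      (v.take ((m.take k).count false))).length = k := by
  have hi := (List.take_sublist k m).count_le true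
  have hj := (List.take_sublist k m).count_le false
  rw [length_interleave (by simp; omega) (by simp; omega), List.length_take, min_eq_left hk]

lemma take_interleave (hu : m.count true = u.length) (hv : m.count false = v.length)
    {k : ℕ} (hk : k ≤ m.length) :
    (interleave m u v).take k =
      interleave (m.take k) (u.take ((m.take k).count true)) (v.take ((m.take k).count false)) := by
  rw [interleave_eq_take_append_drop hu hv k, List.take_left' (length_interleave_take hu hv hk)]

lemma drop_interleave (hu : m.count true = u.length) (hv : m.count false = v.length)
    {k : ℕ} (hk : k ≤ m.length) :
    (interleave m u v).drop k =
      interleave (m.drop k) (u.drop ((m.take k).count true)) (v.drop ((m.take k).count false)) := by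
  rw [interleave_eq_take_append_drop hu hv k, List.drop_left' (length_interleave_take hu hv hk)]

end Interleave

section Masks

def boolLists : ℕ → Finset (List Bool)
  | 0 => {[]}
  | n + 1 => (univ ×ˢ boolLists n).image fun p => p.1 :: p.2

@[simp] lemma mem_boolLists {n : ℕ} {m : List Bool} : m ∈ boolLists n ↔ m.length = n := by
  induction n generalizing m with
  | zero => simp [boolLists]
  | succ n ih => cases m <;> simp [boolLists, ih]

lemma sum_boolLists_succ {M : Type*} [AddCommMonoid M] (n : ℕ) (F : List Bool → M) :
    ∑ m ∈ boolLists (n + 1), F m = ∑ m ∈ boolLists n, (F (true :: m) + F (false :: m)) := by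
  rw [boolLists, sum_image (by simp), sum_product, Fintype.sum_bool, sum_add_distrib]

def masks (n k : ℕ) : Finset (List Bool) := {m ∈ boolLists n | m.count true = k}

@[simp] lemma mem_masks {n k : ℕ} {m : List Bool} :
    m ∈ masks n k ↔ m.length = n ∧ m.count true = k := by
  simp [masks]

lemma mem_masks_add {p q : ℕ} {m : List Bool} :
    m ∈ masks (p + q) p ↔ m.count true = p ∧ m.count false = q := by
  have := List.count_true_add_count_false m
  rw [mem_masks]
  omega

variable {M : Type*} [AddCommMonoid M]

lemma sum_range_sum_masks (n : ℕ) (F : List Bool → M) :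
    ∑ k ∈ range (n + 1), ∑ m ∈ masks n k, F m = ∑ m ∈ boolLists n, F m :=
  sum_fiberwise_of_maps_to (fun m hm => by
    simpa [Nat.lt_succ_iff, (mem_boolLists.mp hm).symm] using List.count_le_length) F

lemma sum_masks_reverse (n k : ℕ) (F : List Bool → M) :
    ∑ m ∈ masks n k, F m.reverse = ∑ m ∈ masks n k, F m :=
  sum_nbij' List.reverse List.reverse (by simp) (by simp) (by simp) (by simp) (by simp)

lemma sum_masks_take_drop (n₁ n₂ : ℕ) (F : List Bool → List Bool → M) :
    ∑ m ∈ masks (n₁ + n₂) n₁, ∑ k ∈ range (n₁ + n₂ + 1), F (m.take k) (m.drop k) =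
      ∑ i ∈ range (n₁ + 1), ∑ j ∈ range (n₂ + 1), ∑ m₁ ∈ masks (i + j) i,
        ∑ m₂ ∈ masks (n₁ - i + (n₂ - j)) (n₁ - i), F m₁ m₂ := by
  have hsigma : ∑ i ∈ range (n₁ + 1), ∑ j ∈ range (n₂ + 1), ∑ m₁ ∈ masks (i + j) i,
      ∑ m₂ ∈ masks (n₁ - i + (n₂ - j)) (n₁ - i), F m₁ m₂ =
      ∑ x ∈ (range (n₁ + 1) ×ˢ range (n₂ + 1)).sigma (fun ij =>
        masks (ij.1 + ij.2) ij.1 ×ˢ masks (n₁ - ij.1 + (n₂ - ij.2)) (n₁ - ij.1)),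
        F x.2.1 x.2.2 := by
    simp_rw [sum_sigma, sum_product]
  rw [hsigma, ← sum_product']
  refine sum_nbij'
    (fun y => ⟨((y.1.take y.2).count true, (y.1.take y.2).count false), y.1.take y.2, y.1.drop y.2⟩)
    (fun x => (x.2.1 ++ x.2.2, x.2.1.length)) ?_ ?_ ?_ ?_ (fun _ _ => rfl)
  · rintro ⟨m, k⟩ h
    simp only [mem_product, mem_masks, mem_range] at h
    have hsplit := congrArg (List.count true) (List.take_append_drop k m)
    have hlen := List.count_true_add_count_false (m.take k)
    have hlen' := List.count_true_add_count_false m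
    have hsub := (List.take_sublist k m).count_le false
    rw [List.count_append] at hsplit
    rw [List.length_take] at hlen
    simp only [mem_sigma, mem_product, mem_range, mem_masks, List.length_take, List.length_drop,
      and_true]
    omega
  · rintro ⟨⟨i, j⟩, m₁, m₂⟩ h
    simp only [mem_sigma, mem_product, mem_range, mem_masks] at h
    simp only [mem_product, mem_masks, mem_range, List.length_append, List.count_append]
    omega
  · rintro ⟨m, k⟩ h
    simp only [mem_product, mem_masks, mem_range] at h
    simp only [List.take_append_drop, List.length_take, Prod.mk.injEq, true_and]
    omega
  · rintro ⟨⟨i, j⟩, m₁, m₂⟩ h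
    simp only [mem_sigma, mem_product, mem_range, mem_masks] at h
    have := List.count_true_add_count_false m₁
    simp only [List.take_left', List.drop_left', Sigma.mk.injEq, Prod.mk.injEq, heq_eq_eq,
      and_true]
    omega

end Masks

section Characters

variable {α R : Type*}

structure IsCharacter [Semiring R] (φ : List α → R) : Prop where
  map_nil : φ [] = 1
  mul_eq_sum_masks : ∀ u v : List α,
    φ u * φ v = ∑ m ∈ masks (u.length + v.length) u.length, φ (interleave m u v)

section Semiring

variable [Semiring R]

def conv (f g : List α → R) (w : List α) : R :=
  ∑ k ∈ range (w.length + 1), f (w.take k) * g (w.drop k)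

def counit (w : List α) : R := if w = [] then 1 else 0

lemma conv_assoc (f g h : List α → R) : conv (conv f g) h = conv f (conv g h) := by
  funext w
  set F : ℕ → ℕ → R := fun j k => f (w.take j) * (g ((w.drop j).take (k - j)) * h (w.drop k))
  have lhs : conv (conv f g) h w = ∑ k ∈ Ico 0 (w.length + 1), ∑ j ∈ Ico 0 (k + 1), F j k := by
    rw [← range_eq_Ico]
    refine sum_congr rfl fun k hk => ?_
    have hk : k ≤ w.length := by simp at hk; omega
    rw [conv, List.length_take_of_le hk, ← range_eq_Ico, sum_mul]
    refine sum_congr rfl fun j hj => ?_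
    have hj : j ≤ k := by simp at hj; omega
    simp only [F, List.take_take, min_eq_left hj, List.drop_take, mul_assoc]
  have rhs : conv f (conv g h) w =
      ∑ j ∈ Ico 0 (w.length + 1), ∑ k ∈ Ico j (w.length + 1), F j k := by
    rw [← range_eq_Ico]
    refine sum_congr rfl fun j hj => ?_
    have hj : j ≤ w.length := by simp at hj; omega
    rw [conv, sum_Ico_eq_sum_range, mul_sum, List.length_drop, Nat.sub_add_comm hj]
    refine sum_congr rfl fun i hi => ?_
    simp only [F, List.drop_drop, Nat.add_sub_cancel_left]
  rw [lhs, rhs, sum_Ico_Ico_comm]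

lemma counit_conv (g : List α → R) : conv counit g = g := by
  funext w
  rw [conv, sum_eq_single 0 (fun k hk hk0 => ?_) (by simp)]
  · simp [counit]
  · cases w with
    | nil => simp at hk; omega
    | cons a w => cases k <;> simp_all [counit]

lemma conv_eq_add_add_sum {f g : List α → R} (hf : f [] = 1) (hg : g [] = 1)
    {n : ℕ} (hn : 1 ≤ n) {w : List α} (hw : w.length = n) :
    conv f g w = f w + g w + ∑ k ∈ univ.filter (fun k : Fin n => 0 < k.1),
      f (w.take k) * g (w.drop k) := by
  obtain ⟨n, rfl⟩ := Nat.exists_eq_add_of_le' hn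
  rw [conv, hw, sum_range_succ, sum_range_succ', sum_filter,
    Fin.sum_univ_eq_sum_range (fun k => if 0 < k then f (w.take k) * g (w.drop k) else 0),
    sum_range_succ']
  simp [← hw, hf, hg]
  abel

end Semiring

theorem isCharacter_conv [CommSemiring R] {f g : List α → R} (hf : IsCharacter f)
    (hg : IsCharacter g) : IsCharacter (conv f g) where
  map_nil := by simp [conv, hf.map_nil, hg.map_nil]
  mul_eq_sum_masks u v := by
    set H : List Bool → List Bool → R := fun m₁ m₂ =>
      f (interleave m₁ (u.take (m₁.count true)) (v.take (m₁.count false))) *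
        g (interleave m₂ (u.drop (m₁.count true)) (v.drop (m₁.count false)))
    have lhs : conv f g u * conv f g v =
        ∑ i ∈ range (u.length + 1), ∑ j ∈ range (v.length + 1), ∑ m₁ ∈ masks (i + j) i,
          ∑ m₂ ∈ masks (u.length - i + (v.length - j)) (u.length - i), H m₁ m₂ := by
      rw [conv, conv, sum_mul_sum]
      refine sum_congr rfl fun i hi => sum_congr rfl fun j hj => ?_
      have hi : i ≤ u.length := by simp at hi; omega
      have hj : j ≤ v.length := by simp at hj; omega
      calc f (u.take i) * g (u.drop i) * (f (v.take j) * g (v.drop j))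
          = f (u.take i) * f (v.take j) * (g (u.drop i) * g (v.drop j)) := by ring
        _ = _ := by
          rw [hf.mul_eq_sum_masks, hg.mul_eq_sum_masks, sum_mul_sum]
          simp only [List.length_take, List.length_drop, min_eq_left hi, min_eq_left hj]
          refine sum_congr rfl fun m₁ hm₁ => sum_congr rfl fun m₂ _ => ?_
          obtain ⟨hci, hcj⟩ := mem_masks_add.mp hm₁
          simp only [H, hci, hcj]
    have rhs : ∀ m ∈ masks (u.length + v.length) u.length, conv f g (interleave m u v) =
        ∑ k ∈ range (u.length + v.length + 1), H (m.take k) (m.drop k) := by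
      intro m hm
      obtain ⟨hu, hv⟩ := mem_masks_add.mp hm
      rw [conv, length_interleave hu hv, (mem_masks.mp hm).1]
      refine sum_congr rfl fun k hk => ?_
      have hk : k ≤ m.length := by simp [(mem_masks.mp hm).1] at hk ⊢; omega
      rw [take_interleave hu hv hk, drop_interleave hu hv hk]
    rw [lhs, sum_congr rfl rhs, sum_masks_take_drop]

/-- `φ ∘ S` for the antipode `S` of the shuffle Hopf algebra. -/
def antipode [Ring R] (φ : List α → R) (w : List α) : R := (-1) ^ w.length * φ w.reverse

variable [CommRing R]

theorem isCharacter_antipode {φ : List α → R} (hφ : IsCharacter φ) :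
    IsCharacter (antipode φ) where
  map_nil := by simp [antipode, hφ.map_nil]
  mul_eq_sum_masks u v := by
    simp only [antipode]
    rw [mul_mul_mul_comm, ← pow_add, hφ.mul_eq_sum_masks, mul_sum, List.length_reverse,
      List.length_reverse, ← sum_masks_reverse]
    refine sum_congr rfl fun m hm => ?_
    obtain ⟨hu, hv⟩ := mem_masks_add.mp hm
    rw [reverse_interleave hu hv, length_interleave hu hv, (mem_masks.mp hm).1]

theorem antipode_conv_cancel {φ : List α → R} (hφ : IsCharacter φ) :
    conv (antipode φ) φ = counit := by
  funext w
  set W : List Bool → R := fun m =>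
    (-1) ^ m.count true * φ (interleave m (w.take (m.count true)).reverse (w.drop (m.count true)))
  have expand : ∀ k ∈ range (w.length + 1),
      antipode φ (w.take k) * φ (w.drop k) = ∑ m ∈ masks w.length k, W m := by
    intro k hk
    have hk : k ≤ w.length := by simp at hk; omega
    rw [antipode, mul_assoc, hφ.mul_eq_sum_masks, mul_sum]
    simp only [List.length_reverse, List.length_take, List.length_drop, min_eq_left hk,
      Nat.add_sub_cancel' hk]
    refine sum_congr rfl fun m hm => ?_
    simp only [W, (mem_masks.mp hm).2]
  -- With `c = m.count true`, the letter `w[c]` comes first in both words: as the last letter of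
  -- the reversed prefix for `true :: m`, as the first letter of the suffix for `false :: m`.
  have cancel : ∀ m : List Bool, m.length < w.length → W (true :: m) + W (false :: m) = 0 := by
    intro m hm
    have hc : m.count true < w.length := List.count_le_length.trans_lt hm
    have htake : (w.take (m.count true + 1)).reverse =
        w[m.count true] :: (w.take (m.count true)).reverse := by
      rw [← List.take_append_getElem hc]
      simp
    simp only [W, List.count_cons_self, List.count_cons_of_ne (by decide : false ≠ true), htake,
      List.drop_eq_getElem_cons hc, interleave_true_cons, interleave_false_cons, pow_succ]
    ring
  rw [conv, sum_congr rfl expand]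
  rcases w with _ | ⟨a, w⟩
  · simp [W, counit, masks, boolLists, filter_singleton, hφ.map_nil]
  · rw [sum_range_sum_masks, List.length_cons, sum_boolLists_succ]
    simp only [counit, reduceCtorEq, if_false]
    exact sum_eq_zero fun m hm => cancel m (by simp at hm ⊢; omega)

theorem conv_antipode_conv_cancel {ψ : List α → R} (hψ : IsCharacter ψ) (f g : List α → R) :
    conv (conv f (antipode ψ)) (conv ψ g) = conv f g := by
  rw [conv_assoc, ← conv_assoc (antipode ψ), antipode_conv_cancel hψ, counit_conv]

end Characters

section Tuples

variable {α β : Type*}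

def liftToList (F : (n : ℕ) → (Fin n → α) → β) (w : List α) : β :=
  F w.length fun i => w[(i : ℕ)]

lemma liftToList_eq (F : (n : ℕ) → (Fin n → α) → β) {n : ℕ} (w : List α) (h : w.length = n) :
    liftToList F w = F n fun i => w[(i : ℕ)]'(by omega) := by
  subst h
  rfl

@[simp] lemma liftToList_ofFn (F : (n : ℕ) → (Fin n → α) → β) {n : ℕ} (u : Fin n → α) :
    liftToList F (List.ofFn u) = F n u := by
  simp [liftToList_eq F _ List.length_ofFn]

lemma count_take_ofFn {n : ℕ} (p : Fin n → Bool) (b : Bool) (i : ℕ) :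
    ((List.ofFn p).take i).count b = #{j : Fin n | (j : ℕ) < i ∧ p j = b} := by
  induction n generalizing i with
  | zero => simp
  | succ n ih =>
    cases i with
    | zero => simp
    | succ i =>
      rw [List.ofFn_succ, List.take_succ_cons, List.count_cons, ih, Fin.card_filter_univ_succ']
      simp [add_comm, beq_iff_eq]

lemma card_filter_lt_eq_orderIsoOfFin_symm [LinearOrder α] (S : Finset α) {k : ℕ}
    (h : #S = k) {x : α} (hx : x ∈ S) :
    #{y ∈ S | y < x} = ((S.orderIsoOfFin h).symm ⟨x, hx⟩ : ℕ) := by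
  set i := (S.orderIsoOfFin h).symm ⟨x, hx⟩
  have hix : S.orderEmbOfFin h i = x := by simp [i, ← coe_orderIsoOfFin_apply]
  rw [← Fin.card_Iio i, ← card_map (S.orderEmbOfFin h).toEmbedding]
  congr 1
  ext y
  simp only [mem_filter, mem_map, mem_Iio, RelEmbedding.coe_toEmbedding]
  constructor
  · rintro ⟨hy, hyx⟩
    exact ⟨(S.orderIsoOfFin h).symm ⟨y, hy⟩, (OrderIso.lt_iff_lt _).mpr hyx,
      by simp [← coe_orderIsoOfFin_apply]⟩
  · rintro ⟨j, hj, rfl⟩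
    exact ⟨orderEmbOfFin_mem S h j, hix ▸ (S.orderEmbOfFin h).strictMono hj⟩

def indicatorMask {n : ℕ} (S : Finset (Fin n)) : List Bool := List.ofFn fun i => decide (i ∈ S)

lemma count_indicatorMask {n : ℕ} (S : Finset (Fin n)) :
    (indicatorMask S).count true = #S ∧ (indicatorMask S).count false = n - #S := by
  have hall := fun b => count_take_ofFn (fun i => decide (i ∈ S)) b n
  rw [List.take_of_length_le (by simp)] at hall
  refine ⟨by simpa [indicatorMask] using hall true, ?_⟩
  rw [indicatorMask, hall false, show n - #S = #Sᶜ by simp [card_compl]]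
  congr 1
  ext j
  simp

lemma indicatorMask_setOf {n : ℕ} {m : List Bool} (hm : m.length = n) :
    indicatorMask ({i : Fin n | m[(i : ℕ)]? = some true} : Finset (Fin n)) = m := by
  refine List.ext_getElem? fun i => ?_
  rw [indicatorMask, List.getElem?_ofFn]
  split_ifs with hi
  · cases h : m[i]? with
    | none => simp_all
    | some b => cases b <;> simp_all
  · exact (List.getElem?_eq_none (by omega)).symm

variable {d : ℕ}

lemma ofFn_shuffleWord {n₁ n₂ : ℕ} (u : Fin n₁ → Fin d) (v : Fin n₂ → Fin d)
    (S : Finset (Fin (n₁ + n₂))) (hS : #S = n₁) :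
    List.ofFn (shuffleWord u v S hS) =
      interleave (indicatorMask S) (List.ofFn u) (List.ofFn v) := by
  obtain ⟨hu, hv⟩ := count_indicatorMask S
  rw [hS, Nat.add_sub_cancel_left] at hv
  refine List.ext_getElem? fun i => ?_
  rw [getElem?_interleave (hu.trans (hS.trans List.length_ofFn.symm))
    (hv.trans List.length_ofFn.symm), List.getElem?_ofFn, indicatorMask, List.getElem?_ofFn]
  split_ifs with hi
  · simp only [Option.bind_some, shuffleWord, count_take_ofFn]
    by_cases hm : (⟨i, hi⟩ : Fin (n₁ + n₂)) ∈ S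
    · have hrank : #{j : Fin (n₁ + n₂) | (j : ℕ) < i ∧ decide (j ∈ S) = true} =
          #{y ∈ S | y < ⟨i, hi⟩} := by
        congr 1; ext; simp [Fin.lt_def, and_comm]
      rw [dif_pos hm, if_pos (decide_eq_true hm), hrank,
        card_filter_lt_eq_orderIsoOfFin_symm S hS hm, List.getElem?_ofFn, dif_pos (Fin.isLt _)]
    · have hrank : #{j : Fin (n₁ + n₂) | (j : ℕ) < i ∧ decide (j ∈ S) = false} =
          #{y ∈ Sᶜ | y < ⟨i, hi⟩} := by
        congr 1; ext; simp [Fin.lt_def, and_comm]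
      rw [dif_neg hm, if_neg (by simpa using hm), hrank,
        card_filter_lt_eq_orderIsoOfFin_symm Sᶜ _ (mem_compl.mpr hm), List.getElem?_ofFn,
        dif_pos (Fin.isLt _)]
  · rfl

lemma sum_shuffleWord [AddCommMonoid β] {n₁ n₂ : ℕ} (u : Fin n₁ → Fin d) (v : Fin n₂ → Fin d)
    (F : (n : ℕ) → (Fin n → Fin d) → β) :
    ∑ S : {S : Finset (Fin (n₁ + n₂)) // #S = n₁}, F (n₁ + n₂) (shuffleWord u v S.1 S.2) =
      ∑ m ∈ masks (n₁ + n₂) n₁, liftToList F (interleave m (List.ofFn u) (List.ofFn v)) := by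
  set G : List Bool → β := fun m => liftToList F (interleave m (List.ofFn u) (List.ofFn v))
  calc ∑ S : {S : Finset (Fin (n₁ + n₂)) // #S = n₁}, F (n₁ + n₂) (shuffleWord u v S.1 S.2)
      = ∑ S : {S : Finset (Fin (n₁ + n₂)) // #S = n₁}, G (indicatorMask S.1) :=
        sum_congr rfl fun S _ => by
          rw [← liftToList_ofFn F (shuffleWord u v S.1 S.2), ofFn_shuffleWord]
    _ = ∑ S ∈ univ.filter (#· = n₁), G (indicatorMask S) :=
        (sum_subtype _ (by simp) (G ∘ indicatorMask)).symm
    _ = ∑ m ∈ masks (n₁ + n₂) n₁, G m := by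
      refine sum_nbij' indicatorMask
        (fun m => ({i | m[(i : ℕ)]? = some true} : Finset (Fin (n₁ + n₂)))) ?_ ?_ ?_ ?_
        (fun _ _ => rfl)
      · intro S hS
        simp only [mem_filter, mem_univ, true_and] at hS
        exact mem_masks.mpr ⟨List.length_ofFn, (count_indicatorMask S).1.trans hS⟩
      · intro m hm
        obtain ⟨hlen, hcount⟩ := mem_masks.mp hm
        simpa [← hcount, (count_indicatorMask _).1] using
          congrArg (List.count true) (indicatorMask_setOf hlen)
      · intro S _
        ext i
        simp [indicatorMask]
      · intro m hm
        exact indicatorMask_setOf (mem_masks.mp hm).1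

theorem isCharacter_liftToList_iff {R : Type*} [Semiring R]
    (F : (n : ℕ) → (Fin n → Fin d) → R) :
    IsCharacter (liftToList F) ↔ F 0 (fun i => i.elim0) = 1 ∧
      ∀ (n₁ n₂ : ℕ) (u : Fin n₁ → Fin d) (v : Fin n₂ → Fin d),
        F n₁ u * F n₂ v = ∑ S : {S : Finset (Fin (n₁ + n₂)) // #S = n₁},
          F (n₁ + n₂) (shuffleWord u v S.1 S.2) := by
  have hnil : liftToList F [] = F 0 (fun i => i.elim0) := by
    rw [liftToList_eq F [] rfl]
    congr
    funext i
    exact i.elim0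
  constructor
  · rintro ⟨h0, hmul⟩
    refine ⟨hnil ▸ h0, fun n₁ n₂ u v => ?_⟩
    rw [sum_shuffleWord, ← liftToList_ofFn F u, ← liftToList_ofFn F v, hmul]
    simp only [List.length_ofFn]
  · rintro ⟨h0, hmul⟩
    refine ⟨hnil.trans h0, fun u v => ?_⟩
    have := hmul _ _ (fun i => u[(i : ℕ)]) (fun i => v[(i : ℕ)])
    rwa [sum_shuffleWord, List.ofFn_getElem, List.ofFn_getElem] at this

theorem conv_antipode_ofFn {R : Type*} [CommRing R] (f g : (n : ℕ) → (Fin n → Fin d) → R)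
    {n : ℕ} (w : Fin n → Fin d) :
    conv (liftToList f) (antipode (liftToList g)) (List.ofFn w) =
      ∑ k : Fin (n + 1), (-1 : R) ^ (n - k.1) *
        (f k.1 (fun j => w ⟨j.1, by omega⟩) *
          g (n - k.1) (fun j => w ⟨n - 1 - j.1, by omega⟩)) := by
  rw [conv, List.length_ofFn, ← Fin.sum_univ_eq_sum_range]
  refine sum_congr rfl fun k _ => ?_
  have hk := k.isLt
  have hrev : (fun i : Fin (n - k) => ((List.ofFn w).drop k).reverse[(i : ℕ)]'(by simp)) =
      fun j => w ⟨n - 1 - j.1, by omega⟩ := by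
    funext j
    simp only [List.getElem_reverse, List.getElem_drop, List.getElem_ofFn, List.length_drop,
      List.length_ofFn]
    congr 2
    omega
  rw [antipode, liftToList_eq f _ (n := k) (by simp; omega),
    liftToList_eq g _ (n := n - k) (by simp), hrev]
  simp only [List.getElem_take, List.getElem_ofFn, List.length_drop, List.length_ofFn]
  ring

end Tuples

end ShuffleAlgebra

open ShuffleAlgebra

/-- **Rough paths from families of shuffle characters**: given a family `χ^t`, `t ∈ ℝ`, of
characters of the shuffle algebra over `{1,…,d}`, the functional
`Γⁿ_{ts}(i₁,…,iₙ) := Σ_{k=0}^{n} (−1)^{n−k} χ^t(i₁,…,i_k) χ^s(iₙ,…,i_{k+1})`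
satisfies the Chen and shuffle properties. -/
theorem rough_path_from_characters
    (d : ℕ) (χ : ℝ → (n : ℕ) → (Fin n → Fin d) → ℝ)
    (hempty : ∀ t : ℝ, χ t 0 (fun i => i.elim0) = 1)
    (hshuffle : ∀ (t : ℝ) (n₁ n₂ : ℕ) (u : Fin n₁ → Fin d) (v : Fin n₂ → Fin d),
      χ t n₁ u * χ t n₂ v = ∑ S : {S : Finset (Fin (n₁ + n₂)) // S.card = n₁},
        χ t (n₁ + n₂) (shuffleWord u v S.1 S.2))
    (X : (n : ℕ) → (Fin n → Fin d) → ℝ → ℝ → ℝ)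
    (hX : ∀ (n : ℕ) (w : Fin n → Fin d) (t s : ℝ),
      X n w t s = ∑ k : Fin (n + 1), (-1 : ℝ) ^ (n - k.1) *
        (χ t k.1 (fun j => w ⟨j.1, by have h1 := j.isLt; have h2 := k.isLt; omega⟩) *
          χ s (n - k.1) (fun j => w ⟨n - 1 - j.1, by have h1 := j.isLt; omega⟩))) :
    -- Chen property
    (∀ n : ℕ, 2 ≤ n → ∀ (w : Fin n → Fin d) (t u s : ℝ),
      X n w t s = X n w t u + X n w u s +
        ∑ k ∈ Finset.univ.filter (fun k : Fin n => 0 < k.1),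
          X k.1 (fun j => w ⟨j.1, by have h1 := j.isLt; have h2 := k.isLt; omega⟩) t u *
            X (n - k.1)
              (fun j => w ⟨k.1 + j.1, by have h1 := j.isLt; have h2 := k.isLt; omega⟩) u s) ∧
    -- shuffle property
    (∀ n₁ n₂ : ℕ, 1 ≤ n₁ → 1 ≤ n₂ →
      ∀ (u : Fin n₁ → Fin d) (v : Fin n₂ → Fin d) (t s : ℝ),
        X n₁ u t s * X n₂ v t s =
          ∑ S : {S : Finset (Fin (n₁ + n₂)) // S.card = n₁},
            X (n₁ + n₂) (shuffleWord u v S.1 S.2) t s) := by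
  have hχ : ∀ t, IsCharacter (liftToList (χ t)) := fun t =>
    (isCharacter_liftToList_iff _).mpr ⟨hempty t, hshuffle t⟩
  set Γ : ℝ → ℝ → List (Fin d) → ℝ := fun t s =>
    conv (liftToList (χ t)) (antipode (liftToList (χ s)))
  have hΓ : ∀ t s, IsCharacter (Γ t s) := fun t s =>
    isCharacter_conv (hχ t) (isCharacter_antipode (hχ s))
  have hXw : ∀ {n} (w : Fin n → Fin d) t s, X n w t s = Γ t s (List.ofFn w) := fun w t s =>
    (hX _ w t s).trans (conv_antipode_ofFn _ _ w).symm
  have hXΓ : ∀ t s, liftToList (fun n w => X n w t s) = Γ t s := fun t s => funext fun w => by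
    rw [liftToList, hXw, List.ofFn_getElem]
  refine ⟨fun n hn w t u s => ?_, fun n₁ n₂ _ _ u v t s =>
    ((isCharacter_liftToList_iff _).mp (hXΓ t s ▸ hΓ t s)).2 n₁ n₂ u v⟩
  have hchen : Γ t s = conv (Γ t u) (Γ u s) := (conv_antipode_conv_cancel (hχ u) _ _).symm
  rw [hXw, hXw, hXw, hchen, conv_eq_add_add_sum (hΓ t u).map_nil (hΓ u s).map_nil (by omega)
    List.length_ofFn]
  congr 1
  refine Finset.sum_congr rfl fun k _ => ?_
  have hk := k.isLt
  rw [hXw, hXw]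
  congr 2
  · exact List.ext_getElem (by simp [hk.le]) (by simp)
  · exact List.ext_getElem (by simp) (by simp)
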